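/- arXiv:0902.0584 — 5 statements merged into one kernel-verified Lean document; each statement's English description precedes it below -/
import Mathlib

section
/- Let c : ℤ → ℝ be a function with c(k) > 0 for all k, and set c̄(k) = c(k) + c(k−1). Define f : ℤ → ℝ by f(0) = 0, f(m) = ∑_{ℓ=0}^{m−1} (1/c(ℓ)) ∑_{k=1}^{ℓ} c̄(k) for m ≥ 1, and f(m) = ∑_{ℓ=1}^{−m} (1/c(−ℓ)) ∑_{k=0}^{ℓ−1} c̄(−k) for m ≤ −1. Then f(m) ≥ 0 for every m, f(0) = f(1) = 0, and f satisfies (P − I)f ≡ 1, i.e. (c(m−1) f(m−1) + c(m) f(m+1))/c̄(m) − f(m) = 1 for every m ∈ ℤ. -/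
open Finset

theorem stmt_0 (c : ℤ → ℝ) (hc : ∀ k, 0 < c k)
    (cbar : ℤ → ℝ) (hcbar : ∀ k, cbar k = c k + c (k - 1))
    (f : ℤ → ℝ)
    (hf0 : f 0 = 0)
    (hfpos : ∀ m : ℤ, 1 ≤ m →
      f m = ∑ ℓ ∈ Finset.range m.toNat,
        (c (ℓ : ℤ))⁻¹ * ∑ k ∈ Finset.Icc 1 ℓ, cbar (k : ℤ))
    (hfneg : ∀ m : ℤ, m ≤ -1 →
      f m = ∑ ℓ ∈ Finset.Icc 1 (-m).toNat,
        (c (-(ℓ : ℤ)))⁻¹ * ∑ k ∈ Finset.range ℓ, cbar (-(k : ℤ))) :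
    (∀ m : ℤ, 0 ≤ f m) ∧ f 0 = 0 ∧ f 1 = 0 ∧
      ∀ m : ℤ, (c (m - 1) * f (m - 1) + c m * f (m + 1)) / cbar m - f m = 1 := by
  have hcbarpos : ∀ k : ℤ, 0 < cbar k := fun k => by
    rw [hcbar]; exact add_pos (hc k) (hc (k - 1))
  have fa : ∀ n : ℕ, f (n : ℤ) = ∑ ℓ ∈ Finset.range n,
      (c (ℓ : ℤ))⁻¹ * ∑ k ∈ Finset.Icc 1 ℓ, cbar (k : ℤ) := by
    intro n
    rcases Nat.eq_zero_or_pos n with h | h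
    · subst h; simpa using hf0
    · have := hfpos (n : ℤ) (by exact_mod_cast h)
      simpa using this
  have fb : ∀ n : ℕ, f (-(n : ℤ)) = ∑ ℓ ∈ Finset.Icc 1 n,
      (c (-(ℓ : ℤ)))⁻¹ * ∑ k ∈ Finset.range ℓ, cbar (-(k : ℤ)) := by
    intro n
    rcases Nat.eq_zero_or_pos n with h | h
    · subst h; simpa using hf0
    · have := hfneg (-(n : ℤ)) (by omega)
      simpa using this
  have A : ∀ n : ℕ, c (n : ℤ) * (f ((n : ℤ) + 1) - f (n : ℤ)) =
      ∑ k ∈ Finset.Icc 1 n, cbar (k : ℤ) := by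
    intro n
    have h1 : ((n : ℤ) + 1) = ((n + 1 : ℕ) : ℤ) := by push_cast; ring
    rw [h1, fa (n + 1), fa n, Finset.sum_range_succ, add_sub_cancel_left,
      mul_inv_cancel_left₀ (hc _).ne']
  have B : ∀ n : ℕ, c (-((n : ℤ) + 1)) * (f (-((n : ℤ) + 1)) - f (-(n : ℤ))) =
      ∑ k ∈ Finset.range (n + 1), cbar (-(k : ℤ)) := by
    intro n
    have h1 : -((n : ℤ) + 1) = -((n + 1 : ℕ) : ℤ) := by push_cast; ring
    rw [h1, fb (n + 1), fb n, Finset.sum_Icc_succ_top (by omega : 1 ≤ n + 1),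
      add_sub_cancel_left]
    push_cast
    rw [mul_inv_cancel_left₀ (hc _).ne']
  have hf1 : f 1 = 0 := by
    have := fa 1
    simp at this
    simpa using this
  have hnn : ∀ m : ℤ, 0 ≤ f m := by
    intro m
    rcases le_or_gt 0 m with h | h
    · lift m to ℕ using h
      rw [fa m]
      exact Finset.sum_nonneg fun ℓ _ => mul_nonneg (inv_nonneg.2 (hc _).le)
        (Finset.sum_nonneg fun k _ => (hcbarpos _).le)
    · have hm : m = -(((-m).toNat : ℕ) : ℤ) := by omega
      rw [hm, fb]
      exact Finset.sum_nonneg fun ℓ _ => mul_nonneg (inv_nonneg.2 (hc _).le)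
        (Finset.sum_nonneg fun k _ => (hcbarpos _).le)
  refine ⟨hnn, hf0, hf1, ?_⟩
  intro m
  have key : c (m - 1) * f (m - 1) + c m * f (m + 1) - cbar m * f m = cbar m := by
    rcases lt_trichotomy m 0 with h | h | h
    · obtain ⟨n, hn⟩ : ∃ n : ℕ, m = -((n : ℤ) + 1) := ⟨(-m - 1).toNat, by omega⟩
      subst hn
      have hBn := B n
      have hBn1 := B (n + 1)
      have hT : ∑ k ∈ Finset.range (n + 1 + 1), cbar (-(k : ℤ)) =
          (∑ k ∈ Finset.range (n + 1), cbar (-(k : ℤ))) + cbar (-((n + 1 : ℕ) : ℤ)) :=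
        Finset.sum_range_succ _ _
      have hc1 := hcbar (-((n : ℤ) + 1))
      rw [hcbar (-((n : ℤ) + 1))]
      push_cast at hBn hBn1 hT hc1 ⊢
      ring_nf at hBn hBn1 hT hc1 ⊢
      linarith
    · subst h
      have hfm1 := fb 1
      simp [Finset.sum_range_one] at hfm1
      have hc0 := hcbar 0
      have hm1 : f (-1 : ℤ) = (c (-1 : ℤ))⁻¹ * cbar 0 := by
        convert hfm1 using 3 <;> norm_num
      have : c ((0 : ℤ) - 1) * f ((0 : ℤ) - 1) = cbar 0 := by
        norm_num [hm1, mul_inv_cancel_left₀ (hc (-1 : ℤ)).ne']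
      simp only [hf0, hf1, zero_add, mul_zero, sub_zero]
      norm_num at this ⊢
      linarith
    · obtain ⟨n, hn⟩ : ∃ n : ℕ, m = (n : ℤ) + 1 := ⟨(m - 1).toNat, by omega⟩
      subst hn
      have hAn := A n
      have hAn1 := A (n + 1)
      have hT : ∑ k ∈ Finset.Icc 1 (n + 1), cbar (k : ℤ) =
          (∑ k ∈ Finset.Icc 1 n, cbar (k : ℤ)) + cbar ((n + 1 : ℕ) : ℤ) :=
        Finset.sum_Icc_succ_top (by omega) _
      have hc1 := hcbar ((n : ℤ) + 1)
      rw [hcbar ((n : ℤ) + 1)]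
      push_cast at hAn hAn1 hT hc1 ⊢
      ring_nf at hAn hAn1 hT hc1 ⊢
      linarith
  have hne := (hcbarpos m).ne'
  field_simp
  linarith [key]
end

section
/- Let (Ω, 𝒜, μ) be a probability space, T : Ω → Ω an invertible, ergodic, μ-preserving transformation, and c : Ω → ℝ a measurable function with c > 0 μ-a.e.; set c̄ = c + c∘T^{−1}. Assume both c and 1/c are μ-integrable. For ω ∈ Ω define f_ω : ℤ → ℝ by f_ω(0) = 0, f_ω(m) = ∑_{ℓ=0}^{m−1} (1/c(T^ℓω)) ∑_{k=1}^{ℓ} c̄(T^kω) for m ≥ 1, and f_ω(m) = ∑_{ℓ=1}^{−m} (1/c(T^{−ℓ}ω)) ∑_{k=0}^{ℓ−1} c̄(T^{−k}ω) for m ≤ −1. Then for μ-almost every ω, f_ω(m)/m² converges, as m → +∞ and as m → −∞, to (1/2)(∫_Ω (1/c) dμ)(∫_Ω c̄ dμ). -/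
/-!
Write `u ℓ = 1 / c (T^ℓ ω)` and `v ℓ = ∑_{k=1}^{ℓ} c̄ (T^k ω)`, so that `f_ω m = ∑_{ℓ<m} u ℓ * v ℓ`.
By Birkhoff's ergodic theorem (which follows from Garsia's maximal inequality), almost surely
`∑_{ℓ<n} u ℓ ~ n ∫ 1/c` and `v ℓ ~ ℓ ∫ c̄`. Since `u ≥ 0` has linearly growing partial sums,
replacing `v ℓ` by `ℓ ∫ c̄` changes `∑_{ℓ<n} u ℓ * v ℓ` only by `o(n²)`, and Abel summation gives
`∑_{ℓ<n} u ℓ * ℓ ~ (n² / 2) ∫ 1/c`. The limit `m → -∞` is the same argument for `T⁻¹`.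
-/

open Finset Filter MeasureTheory Topology Asymptotics

theorem isLittleO_sum_range_mul_of_isLittleO {u e : ℕ → ℝ} (hu : ∀ ℓ, 0 ≤ u ℓ)
    (hS : (fun n ↦ ∑ ℓ ∈ range n, u ℓ) =O[atTop] fun n ↦ (n : ℝ))
    (he : e =o[atTop] fun ℓ ↦ (ℓ : ℝ)) :
    (fun n ↦ ∑ ℓ ∈ range n, u ℓ * e ℓ) =o[atTop] fun n ↦ (n : ℝ) ^ 2 := by
  -- A weight dominating `u ℓ * ℓ` whose partial sums diverge, as `IsLittleO.sum_range` needs.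
  set g : ℕ → ℝ := fun ℓ ↦ (u ℓ + 1) * (ℓ + 1)
  have hg : 0 ≤ g := fun ℓ ↦ by have := hu ℓ; positivity
  have hug : (fun ℓ ↦ u ℓ * e ℓ) =o[atTop] g := by
    refine IsBigO.mul_isLittleO ?_ (he.trans_isBigO ?_) <;>
      refine IsBigO.of_bound 1 (Eventually.of_forall fun ℓ ↦ ?_)
    · rw [one_mul, Real.norm_of_nonneg (hu ℓ), Real.norm_of_nonneg (by linarith [hu ℓ])]
      linarith
    · rw [one_mul, Real.norm_natCast, Real.norm_of_nonneg (by positivity)]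
      linarith
  have hsum_g : Tendsto (fun n ↦ ∑ ℓ ∈ range n, g ℓ) atTop atTop := by
    refine tendsto_atTop_mono (fun n ↦ ?_) tendsto_natCast_atTop_atTop
    calc (n : ℝ) = ∑ ℓ ∈ range n, 1 := by simp
      _ ≤ ∑ ℓ ∈ range n, g ℓ := sum_le_sum fun ℓ _ ↦ by
        have := hu ℓ; simp only [g]; nlinarith [(Nat.cast_nonneg ℓ : (0:ℝ) ≤ ℓ)]
  have hg_sq : (fun n ↦ ∑ ℓ ∈ range n, g ℓ) =O[atTop] fun n ↦ (n : ℝ) ^ 2 := by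
    have hbound : ∀ n, ∑ ℓ ∈ range n, g ℓ ≤ ((∑ ℓ ∈ range n, u ℓ) + n) * n := fun n ↦ by
      calc ∑ ℓ ∈ range n, g ℓ ≤ ∑ ℓ ∈ range n, (u ℓ + 1) * n := by
            refine sum_le_sum fun ℓ hℓ ↦ mul_le_mul_of_nonneg_left ?_ (by linarith [hu ℓ])
            exact_mod_cast mem_range.mp hℓ
        _ = ((∑ ℓ ∈ range n, u ℓ) + n) * n := by simp [← sum_mul, sum_add_distrib]
    have : (fun n ↦ ((∑ ℓ ∈ range n, u ℓ) + n) * n) =O[atTop] fun n ↦ (n : ℝ) ^ 2 := by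
      simpa [sq] using (hS.add (isBigO_refl _ _)).mul (isBigO_refl (fun n : ℕ ↦ (n : ℝ)) atTop)
    refine IsBigO.trans (IsBigO.of_bound 1 (Eventually.of_forall fun n ↦ ?_)) this
    rw [one_mul, Real.norm_of_nonneg (sum_nonneg fun ℓ _ ↦ hg ℓ)]
    exact (hbound n).trans (le_abs_self _)
  exact (hug.sum_range hg hsum_g).trans_isBigO hg_sq

theorem isLittleO_sub_mul_of_tendsto_div {x : ℕ → ℝ} {L : ℝ}
    (h : Tendsto (fun n ↦ x n / n) atTop (𝓝 L)) :
    (fun n ↦ x n - L * n) =o[atTop] fun n ↦ (n : ℝ) := by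
  rw [isLittleO_iff_tendsto' ((eventually_ne_atTop 0).mono fun n hn h ↦
    absurd (Nat.cast_eq_zero.mp h) hn)]
  refine (tendsto_sub_nhds_zero_iff.mpr h).congr' ?_
  filter_upwards [eventually_ne_atTop 0] with n hn
  field_simp

theorem sum_Icc_one_eq_sum_range (h : ℕ → ℝ) (n : ℕ) :
    ∑ k ∈ Icc 1 n, h k = ∑ k ∈ range n, h (k + 1) := by
  rw [← Ico_add_one_right_eq_Icc, sum_Ico_eq_sum_range]
  simp [add_comm]

theorem sum_range_natCast (n : ℕ) : ∑ j ∈ range n, (j : ℝ) = n * (n - 1) / 2 := by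
  induction n with
  | zero => simp
  | succ n ih => rw [sum_range_succ, ih]; push_cast; ring

theorem tendsto_one_sub_inv_natCast : Tendsto (fun n : ℕ ↦ 1 - (n : ℝ)⁻¹) atTop (𝓝 1) := by
  simpa using (tendsto_inv_atTop_nhds_zero_nat (𝕜 := ℝ)).const_sub 1

theorem tendsto_sum_range_div_sq {x : ℕ → ℝ} {L : ℝ}
    (h : Tendsto (fun n ↦ x n / n) atTop (𝓝 L)) :
    Tendsto (fun n ↦ (∑ j ∈ range n, x j) / (n : ℝ) ^ 2) atTop (𝓝 (L / 2)) := by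
  have herr := (isLittleO_sum_range_mul_of_isLittleO (u := 1) (fun _ ↦ zero_le_one)
    (by simpa using isBigO_refl _ _) (isLittleO_sub_mul_of_tendsto_div h)).tendsto_div_nhds_zero
  have hlim := (tendsto_one_sub_inv_natCast.const_mul (L / 2)).add herr
  rw [mul_one, add_zero] at hlim
  refine hlim.congr' ?_
  filter_upwards [eventually_ne_atTop 0] with n hn
  have hsplit : ∑ j ∈ range n, x j =
      L * ∑ j ∈ range n, (j : ℝ) + ∑ j ∈ range n, (1 : ℕ → ℝ) j * (x j - L * j) := by
    simp [mul_sum]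
  rw [hsplit, sum_range_natCast]
  field_simp

theorem sum_range_mul_natCast (u : ℕ → ℝ) (n : ℕ) :
    ∑ ℓ ∈ range n, u ℓ * ℓ =
      (n - 1) * ∑ ℓ ∈ range n, u ℓ - ∑ j ∈ range n, ∑ ℓ ∈ range j, u ℓ := by
  induction n with
  | zero => simp
  | succ n ih => simp only [sum_range_succ, ih]; push_cast; ring

theorem tendsto_sum_mul_natCast_div_sq {u : ℕ → ℝ} {a : ℝ}
    (hS : Tendsto (fun n ↦ (∑ ℓ ∈ range n, u ℓ) / n) atTop (𝓝 a)) :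
    Tendsto (fun n ↦ (∑ ℓ ∈ range n, u ℓ * ℓ) / (n : ℝ) ^ 2) atTop (𝓝 (a / 2)) := by
  have hlim := (tendsto_one_sub_inv_natCast.mul hS).sub (tendsto_sum_range_div_sq hS)
  rw [one_mul, sub_half] at hlim
  refine hlim.congr' ?_
  filter_upwards [eventually_ne_atTop 0] with n hn
  rw [sum_range_mul_natCast]
  field_simp

theorem tendsto_sum_mul_div_sq {u v : ℕ → ℝ} {a b : ℝ} (hu : ∀ ℓ, 0 ≤ u ℓ)
    (hS : Tendsto (fun n ↦ (∑ ℓ ∈ range n, u ℓ) / n) atTop (𝓝 a))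
    (hv : Tendsto (fun ℓ ↦ v ℓ / ℓ) atTop (𝓝 b)) :
    Tendsto (fun n ↦ (∑ ℓ ∈ range n, u ℓ * v ℓ) / (n : ℝ) ^ 2) atTop (𝓝 (a * b / 2)) := by
  have hSO : (fun n ↦ ∑ ℓ ∈ range n, u ℓ) =O[atTop] fun n ↦ (n : ℝ) :=
    isBigO_of_div_tendsto_nhds ((eventually_ne_atTop 0).mono fun n hn h ↦
      absurd (Nat.cast_eq_zero.mp h) hn) a hS
  have herr := (isLittleO_sum_range_mul_of_isLittleO hu hSO
    (isLittleO_sub_mul_of_tendsto_div hv)).tendsto_div_nhds_zero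
  have hlim := ((tendsto_sum_mul_natCast_div_sq hS).const_mul b).add herr
  rw [add_zero, ← mul_div_assoc, mul_comm b] at hlim
  refine hlim.congr fun n ↦ ?_
  rw [mul_div_assoc', ← add_div, mul_sum, ← sum_add_distrib]
  congr 1
  refine sum_congr rfl fun ℓ _ ↦ by ring

section BirkhoffSum

variable {α : Type*} {T : α → α} {g : α → ℝ}

theorem partialSups_birkhoffSum_nonneg (n : ℕ) (x : α) :
    0 ≤ partialSups (birkhoffSum T g) n x := by
  simpa using le_partialSups_of_le (birkhoffSum T g) (Nat.zero_le n) x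

theorem partialSups_birkhoffSum_le (n : ℕ) (x : α) :
    partialSups (birkhoffSum T g) n x ≤ max 0 (g x + partialSups (birkhoffSum T g) n (T x)) := by
  refine partialSups_le (birkhoffSum T g) n
    (fun x ↦ max 0 (g x + partialSups (birkhoffSum T g) n (T x))) (fun k hk x ↦ ?_) x
  rcases k with _ | k
  · simp
  · rw [birkhoffSum_succ']
    exact le_max_of_le_right <| (add_le_add_iff_left _).mpr <|
      le_partialSups_of_le (birkhoffSum T g) (Nat.le_of_succ_le hk) (T x)

theorem pos_partialSups_birkhoffSum_iff (n : ℕ) (x : α) :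
    0 < partialSups (birkhoffSum T g) n x ↔ ∃ k ≤ n, 0 < birkhoffSum T g k x := by
  simp [partialSups_eq_sup'_range, Finset.sup'_apply, Finset.lt_sup'_iff]

theorem birkhoffSum_sub_const (s : ℝ) (n : ℕ) (x : α) :
    birkhoffSum T (fun y ↦ g y - s) n x = birkhoffSum T g n x - n * s := by
  simp [birkhoffSum, sum_sub_distrib]

end BirkhoffSum

section Birkhoff

variable {α : Type*} [MeasurableSpace α] {μ : Measure α} {T : α → α} {g : α → ℝ}

theorem measurable_birkhoffSum (hT : Measurable T) (hg : Measurable g) (n : ℕ) :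
    Measurable (birkhoffSum T g n) :=
  Finset.measurable_sum _ fun k _ ↦ hg.comp (hT.iterate k)

theorem integrable_birkhoffSum (hT : MeasurePreserving T μ μ) (hg : Integrable g μ) (n : ℕ) :
    Integrable (birkhoffSum T g n) μ :=
  integrable_finsetSum _ fun k _ ↦ (hT.iterate k).integrable_comp_of_integrable hg

theorem MeasureTheory.MeasurePreserving.ae_forall_iterate {p : α → Prop}
    (hT : MeasurePreserving T μ μ) (h : ∀ᵐ x ∂μ, p x) : ∀ᵐ x ∂μ, ∀ k, p (T^[k] x) :=
  ae_all_iff.mpr fun k ↦ (hT.iterate k).quasiMeasurePreserving.ae h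

theorem measurable_partialSups_birkhoffSum (hT : Measurable T) (hg : Measurable g) (n : ℕ) :
    Measurable (partialSups (birkhoffSum T g) n) := by
  rw [partialSups_eq_sup'_range]
  exact Finset.measurable_sup' _ fun k _ ↦ measurable_birkhoffSum hT hg k

theorem integrable_partialSups_birkhoffSum (hT : MeasurePreserving T μ μ) (hg : Integrable g μ)
    (n : ℕ) : Integrable (partialSups (birkhoffSum T g) n) μ := by
  induction n with
  | zero => simp
  | succ n ih => simpa using ih.sup (integrable_birkhoffSum hT hg (n + 1))

/-- Garsia's maximal ergodic theorem. -/
theorem setIntegral_nonneg_of_exists_birkhoffSum_pos (hT : MeasurePreserving T μ μ)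
    (hg : Measurable g) (hgi : Integrable g μ) :
    0 ≤ ∫ x in {x | ∃ n, 0 < birkhoffSum T g n x}, g x ∂μ := by
  set M : ℕ → α → ℝ := fun n ↦ partialSups (birkhoffSum T g) n
  set A : ℕ → Set α := fun n ↦ {x | 0 < M n x}
  have hA : ∀ n, MeasurableSet (A n) := fun n ↦
    measurableSet_lt measurable_const (measurable_partialSups_birkhoffSum hT.measurable hg n)
  have hUnion : ⋃ n, A n = {x | ∃ n, 0 < birkhoffSum T g n x} := by
    ext x
    simp only [A, M, Set.mem_iUnion, Set.mem_ofPred_eq, pos_partialSups_birkhoffSum_iff]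
    exact ⟨fun ⟨_, k, _, hk⟩ ↦ ⟨k, hk⟩, fun ⟨k, hk⟩ ↦ ⟨k, k, le_rfl, hk⟩⟩
  have hMono : Monotone A := fun m n hmn x hx ↦
    lt_of_lt_of_le hx ((partialSups (birkhoffSum T g)).monotone hmn x)
  -- `M n - M n ∘ T` has integral zero, is `≤ 0` off `A n` and `≤ g` on `A n`.
  have hstep : ∀ n, 0 ≤ ∫ x in A n, g x ∂μ := fun n ↦ by
    have hMi := integrable_partialSups_birkhoffSum hT hgi n
    have hMTi : Integrable (fun x ↦ M n (T x)) μ := hT.integrable_comp_of_integrable hMi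
    have hsubi : Integrable (fun x ↦ M n x - M n (T x)) μ := hMi.sub hMTi
    have hcompl : ∫ x in (A n)ᶜ, (M n x - M n (T x)) ∂μ ≤ 0 := by
      refine setIntegral_nonpos (hA n).compl fun x hx ↦ ?_
      have hx0 : M n x = 0 :=
        le_antisymm (not_lt.mp hx) (partialSups_birkhoffSum_nonneg n x)
      simpa [hx0] using partialSups_birkhoffSum_nonneg n (T x)
    have hinvariant : ∫ x, M n (T x) ∂μ = ∫ x, M n x ∂μ := by
      rw [← integral_map hT.aemeasurable (by rw [hT.map_eq]; exact hMi.aestronglyMeasurable),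
        hT.map_eq]
    calc 0 = ∫ x, (M n x - M n (T x)) ∂μ := by rw [integral_sub hMi hMTi, hinvariant, sub_self]
      _ ≤ ∫ x in A n, (M n x - M n (T x)) ∂μ := by
        rw [← integral_add_compl (hA n) hsubi]; linarith
      _ ≤ ∫ x in A n, g x ∂μ := by
        refine setIntegral_mono_on hsubi.integrableOn hgi.integrableOn (hA n) fun x hx ↦ ?_
        rcases le_max_iff.mp (partialSups_birkhoffSum_le n x) with hle | hle
        · exact absurd hx (not_lt.mpr hle)
        · linarith
  rw [← hUnion]
  exact ge_of_tendsto' (tendsto_setIntegral_of_monotone hA hMono hgi.integrableOn) hstep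

theorem ae_bddAbove_birkhoffSum_of_integral_neg (hT : Ergodic T μ) (hg : Measurable g)
    (hgi : Integrable g μ) (hneg : ∫ x, g x ∂μ < 0) :
    ∀ᵐ x ∂μ, BddAbove (Set.range fun n ↦ birkhoffSum T g n x) := by
  -- The set where the Birkhoff sums are unbounded is invariant; if it had full measure,
  -- Garsia's inequality would give `∫ g ≥ 0`.
  set E := {x | ∀ M : ℕ, ∃ n, (M : ℝ) < birkhoffSum T g n x}
  have hE : MeasurableSet E := by
    simp only [E, Set.ofPred_forall, Set.ofPred_exists]
    exact .iInter fun M ↦ .iUnion fun n ↦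
      measurableSet_lt measurable_const (measurable_birkhoffSum hT.measurable hg n)
  have hEinv : T ⁻¹' E = E := by
    ext x
    simp only [E, Set.mem_preimage, Set.mem_ofPred_eq]
    constructor
    · intro h M
      obtain ⟨n, hn⟩ := h ⌈M - g x⌉₊
      exact ⟨n + 1, by rw [birkhoffSum_succ']; linarith [Nat.le_ceil ((M : ℝ) - g x)]⟩
    · intro h M
      obtain ⟨_ | n, hn⟩ := h ⌈M + g x⌉₊
      · exact absurd hn (by simp)
      · rw [birkhoffSum_succ'] at hn
        exact ⟨n, by linarith [Nat.le_ceil ((M : ℝ) + g x)]⟩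
  rcases hT.ae_empty_or_univ hE hEinv with hE0 | hE1
  · filter_upwards [measure_eq_zero_iff_ae_notMem.mp (ae_eq_empty.mp hE0)] with x hx
    simp only [E, Set.mem_ofPred_eq, not_forall, not_exists, not_lt] at hx
    obtain ⟨M, hM⟩ := hx
    exact ⟨M, Set.forall_mem_range.mpr hM⟩
  · have hA : {x | ∃ n, 0 < birkhoffSum T g n x} =ᵐ[μ] Set.univ := by
      refine ae_eq_univ.mpr (measure_mono_null (Set.compl_subset_compl.mpr fun x hx ↦ ?_)
        (ae_eq_univ.mp hE1))
      simpa using hx 0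
    have := setIntegral_nonneg_of_exists_birkhoffSum_pos hT.toMeasurePreserving hg hgi
    rw [setIntegral_congr_set hA, setIntegral_univ] at this
    exact absurd hneg this.not_gt

theorem ae_eventually_birkhoffSum_div_lt [IsProbabilityMeasure μ] (hT : Ergodic T μ)
    (hg : Measurable g) (hgi : Integrable g μ) :
    ∀ᵐ x ∂μ, ∀ r, ∫ x, g x ∂μ < r → ∀ᶠ n : ℕ in atTop, birkhoffSum T g n x / n < r := by
  have hbdd : ∀ᵐ x ∂μ, ∀ q : ℚ, ∫ x, g x ∂μ < q →
      BddAbove (Set.range fun n ↦ birkhoffSum T (fun y ↦ g y - q) n x) := by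
    refine ae_all_iff.mpr fun q ↦ ?_
    by_cases hq : ∫ x, g x ∂μ < q
    · filter_upwards [ae_bddAbove_birkhoffSum_of_integral_neg hT (hg.sub_const q)
        (hgi.sub (integrable_const _)) (by simpa [integral_sub hgi (integrable_const _)])]
        with x hx _ using hx
    · exact ae_of_all _ fun x h ↦ absurd h hq
  filter_upwards [hbdd] with x hx r hr
  obtain ⟨q, hgq, hqr⟩ := exists_rat_btwn hr
  obtain ⟨C, hC⟩ := hx q hgq
  have hlim : Tendsto (fun n : ℕ ↦ C / n + q) atTop (𝓝 (0 + q)) :=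
    (tendsto_const_div_atTop_nhds_zero_nat C).add_const _
  filter_upwards [hlim.eventually (gt_mem_nhds (by rwa [zero_add])), eventually_ne_atTop 0]
    with n hn hn0
  have hCn : birkhoffSum T (fun y ↦ g y - q) n x ≤ C := hC ⟨n, rfl⟩
  rw [birkhoffSum_sub_const] at hCn
  calc birkhoffSum T g n x / n ≤ C / n + q := by
        rw [div_add' _ _ _ (by exact_mod_cast hn0)]
        gcongr
        linarith
    _ < r := hn

theorem ae_tendsto_birkhoffSum_div [IsProbabilityMeasure μ] (hT : Ergodic T μ)
    (hg : Measurable g) (hgi : Integrable g μ) :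
    ∀ᵐ x ∂μ, Tendsto (fun n : ℕ ↦ birkhoffSum T g n x / n) atTop (𝓝 (∫ x, g x ∂μ)) := by
  filter_upwards [ae_eventually_birkhoffSum_div_lt hT hg hgi,
    ae_eventually_birkhoffSum_div_lt hT hg.neg hgi.neg] with x hupper hlower
  refine tendsto_order.mpr ⟨fun r hr ↦ ?_, hupper⟩
  filter_upwards [hlower (-r) (by simp only [Pi.neg_apply, integral_neg]; linarith)] with n hn
  rw [birkhoffSum_neg, neg_div] at hn
  linarith

end Birkhoff

section Orbit

variable {α : Type*} (T : α → α) (c d : α → ℝ) (ω : α) {a b : ℝ}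

theorem tendsto_sum_inv_mul_sum_Icc_div_sq (hc : ∀ k, 0 ≤ c (T^[k] ω))
    (ha : Tendsto (fun n ↦ birkhoffSum T (fun x ↦ (c x)⁻¹) n ω / n) atTop (𝓝 a))
    (hb : Tendsto (fun n ↦ birkhoffSum T d n (T ω) / n) atTop (𝓝 b)) :
    Tendsto (fun n : ℕ ↦ (∑ ℓ ∈ range n, (c (T^[ℓ] ω))⁻¹ * ∑ k ∈ Icc 1 ℓ, d (T^[k] ω)) /
      (n : ℝ) ^ 2) atTop (𝓝 (a * b / 2)) := by
  have hv : ∀ ℓ, ∑ k ∈ Icc 1 ℓ, d (T^[k] ω) = birkhoffSum T d ℓ (T ω) := fun ℓ ↦ by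
    simp [sum_Icc_one_eq_sum_range, birkhoffSum, Function.iterate_succ_apply]
  simp only [hv]
  exact tendsto_sum_mul_div_sq (fun ℓ ↦ inv_nonneg.mpr (hc ℓ)) ha hb

theorem tendsto_sum_Icc_inv_mul_sum_div_sq (hc : ∀ k, 0 ≤ c (T^[k] (T ω)))
    (ha : Tendsto (fun n ↦ birkhoffSum T (fun x ↦ (c x)⁻¹) n (T ω) / n) atTop (𝓝 a))
    (hb : Tendsto (fun n ↦ birkhoffSum T d n (T ω) / n) atTop (𝓝 b)) :
    Tendsto (fun n : ℕ ↦ (∑ ℓ ∈ Icc 1 n, (c (T^[ℓ] ω))⁻¹ * ∑ k ∈ range ℓ, d (T^[k] ω)) /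
      (n : ℝ) ^ 2) atTop (𝓝 (a * b / 2)) := by
  have hv : Tendsto (fun ℓ ↦ (d ω + birkhoffSum T d ℓ (T ω)) / ℓ) atTop (𝓝 b) := by
    simpa [add_div] using (tendsto_const_div_atTop_nhds_zero_nat (d ω)).add hb
  have hsum : ∀ n, ∑ ℓ ∈ Icc 1 n, (c (T^[ℓ] ω))⁻¹ * ∑ k ∈ range ℓ, d (T^[k] ω) =
      ∑ ℓ ∈ range n, (c (T^[ℓ] (T ω)))⁻¹ * (d ω + birkhoffSum T d ℓ (T ω)) := fun n ↦ by
    rw [sum_Icc_one_eq_sum_range]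
    exact sum_congr rfl fun ℓ _ ↦ congrArg _ (birkhoffSum_succ' T d ℓ ω)
  simp only [hsum]
  exact tendsto_sum_mul_div_sq (fun ℓ ↦ inv_nonneg.mpr (hc ℓ)) ha hv

end Orbit

theorem stmt_2_general {Ω : Type*} [MeasurableSpace Ω] (μ : Measure Ω) [IsProbabilityMeasure μ]
    (T : Ω ≃ᵐ Ω) (hT : Ergodic T μ)
    (c : Ω → ℝ) (hcmeas : Measurable c) (hc : ∀ᵐ ω ∂μ, 0 < c ω)
    (cbar : Ω → ℝ) (hcbar : ∀ ω, cbar ω = c ω + c (T.symm ω))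
    (hcint : Integrable c μ) (hcinvint : Integrable (fun ω => (c ω)⁻¹) μ)
    (f : Ω → ℤ → ℝ)
    (hfpos : ∀ ω, ∀ m : ℤ, 1 ≤ m →
      f ω m = ∑ ℓ ∈ Finset.range m.toNat,
        (c (T^[ℓ] ω))⁻¹ * ∑ k ∈ Finset.Icc 1 ℓ, cbar (T^[k] ω))
    (hfneg : ∀ ω, ∀ m : ℤ, m ≤ -1 →
      f ω m = ∑ ℓ ∈ Finset.Icc 1 (-m).toNat,
        (c (T.symm^[ℓ] ω))⁻¹ * ∑ k ∈ Finset.range ℓ, cbar (T.symm^[k] ω)) :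
    ∀ᵐ ω ∂μ,
      Tendsto (fun m : ℤ => f ω m / (m : ℝ) ^ 2) atTop
        (nhds ((1 / 2) * (∫ ω', (c ω')⁻¹ ∂μ) * (∫ ω', cbar ω' ∂μ))) ∧
      Tendsto (fun m : ℤ => f ω m / (m : ℝ) ^ 2) atBot
        (nhds ((1 / 2) * (∫ ω', (c ω')⁻¹ ∂μ) * (∫ ω', cbar ω' ∂μ))) := by
  have hTμ := hT.toMeasurePreserving
  have hTsymmμ : MeasurePreserving T.symm μ μ := hTμ.symm T
  have hcbar_meas : Measurable cbar := by
    rw [funext hcbar]; exact hcmeas.add (hcmeas.comp T.symm.measurable)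
  have hcbar_int : Integrable cbar μ := by
    rw [funext hcbar]; exact hcint.add (hTsymmμ.integrable_comp_of_integrable hcint)
  have hc0 : ∀ᵐ ω ∂μ, 0 ≤ c ω := hc.mono fun _ h ↦ h.le
  have hlim : (∫ ω', (c ω')⁻¹ ∂μ) * (∫ ω', cbar ω' ∂μ) / 2 =
      1 / 2 * (∫ ω', (c ω')⁻¹ ∂μ) * (∫ ω', cbar ω' ∂μ) := by ring
  filter_upwards [hTμ.ae_forall_iterate hc0, ae_tendsto_birkhoffSum_div hT hcmeas.inv hcinvint,
    hTμ.quasiMeasurePreserving.ae (ae_tendsto_birkhoffSum_div hT hcbar_meas hcbar_int),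
    hTsymmμ.quasiMeasurePreserving.ae (hTsymmμ.ae_forall_iterate hc0),
    hTsymmμ.quasiMeasurePreserving.ae (ae_tendsto_birkhoffSum_div hT.symm hcmeas.inv hcinvint),
    hTsymmμ.quasiMeasurePreserving.ae (ae_tendsto_birkhoffSum_div hT.symm hcbar_meas hcbar_int)]
    with ω hcF haF hbF hcB haB hbB
  constructor
  · rw [← Nat.map_cast_int_atTop, tendsto_map'_iff, ← hlim]
    refine (tendsto_sum_inv_mul_sum_Icc_div_sq T c cbar ω hcF haF hbF).congr' ?_
    filter_upwards [eventually_ge_atTop 1] with n hn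
    simp [hfpos ω n (by exact_mod_cast hn)]
  · rw [← tendsto_comp_neg_atTop_iff, ← Nat.map_cast_int_atTop, tendsto_map'_iff, ← hlim]
    refine (tendsto_sum_Icc_inv_mul_sum_div_sq T.symm c cbar ω hcB haB hbB).congr' ?_
    filter_upwards [eventually_ge_atTop 1] with n hn
    simp [hfneg ω (-n) (by omega)]

theorem stmt_2 {Ω : Type*} [MeasurableSpace Ω] (μ : Measure Ω) [IsProbabilityMeasure μ]
    (T : Ω ≃ᵐ Ω) (hT : Ergodic T μ)
    (c : Ω → ℝ) (hcmeas : Measurable c) (hc : ∀ᵐ ω ∂μ, 0 < c ω)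
    (cbar : Ω → ℝ) (hcbar : ∀ ω, cbar ω = c ω + c (T.symm ω))
    (hcint : Integrable c μ) (hcinvint : Integrable (fun ω => (c ω)⁻¹) μ)
    (f : Ω → ℤ → ℝ)
    (hf0 : ∀ ω, f ω 0 = 0)
    (hfpos : ∀ ω, ∀ m : ℤ, 1 ≤ m →
      f ω m = ∑ ℓ ∈ Finset.range m.toNat,
        (c (T^[ℓ] ω))⁻¹ * ∑ k ∈ Finset.Icc 1 ℓ, cbar (T^[k] ω))
    (hfneg : ∀ ω, ∀ m : ℤ, m ≤ -1 →
      f ω m = ∑ ℓ ∈ Finset.Icc 1 (-m).toNat,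
        (c (T.symm^[ℓ] ω))⁻¹ * ∑ k ∈ Finset.range ℓ, cbar (T.symm^[k] ω)) :
    ∀ᵐ ω ∂μ,
      Tendsto (fun m : ℤ => f ω m / (m : ℝ) ^ 2) atTop
        (nhds ((1 / 2) * (∫ ω', (c ω')⁻¹ ∂μ) * (∫ ω', cbar ω' ∂μ))) ∧
      Tendsto (fun m : ℤ => f ω m / (m : ℝ) ^ 2) atBot
        (nhds ((1 / 2) * (∫ ω', (c ω')⁻¹ ∂μ) * (∫ ω', cbar ω' ∂μ))) :=
  stmt_2_general μ T hT c hcmeas hc cbar hcbar hcint hcinvint f hfpos hfneg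
end

section
/- Let f : ℤ → ℝ be nonnegative and suppose f(m)/m² converges to a finite limit L > 0 as |m| → ∞. Let (ν_n)_{n≥1} be a sequence of probability measures on ℤ such that f is ν_n-integrable and ∫ f dν_n = n for each n ≥ 1. Then the function m ↦ m² is ν_n-integrable for every n, and (1/n) ∫ m² dν_n(m) → 1/L as n → ∞. -/
/-!
Since `f m / m ^ 2 → L`, for all `a < L < b` the inequalities `a m² ≤ f m + C` and
`f m ≤ b m² + C` hold for every `m` with a single constant `C`, as they fail at only finitely
many `m`. Integrating against `ν n` and using `∫ f dν n = n` gives `a ∫ m² dν n ≤ n + C` and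
`n ≤ b ∫ m² dν n + C`, so `(1/n) ∫ m² dν n` is eventually squeezed between any `1/b` and `1/a`.
-/

open Filter MeasureTheory Topology

lemma exists_le_add_const_of_eventually_le_cofinite {α : Type*} {u v : α → ℝ}
    (h : ∀ᶠ x in cofinite, u x ≤ v x) : ∃ C, ∀ x, u x ≤ v x + C := by
  obtain ⟨C, hC⟩ := ((eventually_cofinite.1 h).image fun x => u x - v x).bddAbove
  refine ⟨max C 0, fun x => ?_⟩
  by_cases hx : u x ≤ v x
  · linarith [le_max_right C 0]
  · linarith [hC ⟨x, hx, rfl⟩, le_max_left C 0]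

section RatioLimit

variable {α : Type*} {l : Filter α} {f g : α → ℝ} {L : ℝ}

lemma eventually_mul_le_of_tendsto_div (hg : ∀ᶠ x in l, 0 < g x)
    (h : Tendsto (fun x => f x / g x) l (𝓝 L)) {a : ℝ} (ha : a < L) :
    ∀ᶠ x in l, a * g x ≤ f x := by
  filter_upwards [h.eventually (lt_mem_nhds ha), hg] with x hx hgx
  exact ((lt_div_iff₀ hgx).1 hx).le

lemma eventually_le_mul_of_tendsto_div (hg : ∀ᶠ x in l, 0 < g x)
    (h : Tendsto (fun x => f x / g x) l (𝓝 L)) {b : ℝ} (hb : L < b) :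
    ∀ᶠ x in l, f x ≤ b * g x := by
  filter_upwards [h.eventually (gt_mem_nhds hb), hg] with x hx hgx
  exact ((div_lt_iff₀ hgx).1 hx).le

end RatioLimit

section ProbabilityBounds

variable {α : Type*} [MeasurableSpace α] {μ : Measure α} {u v : α → ℝ} {c C : ℝ}

lemma MeasureTheory.Integrable.of_const_mul_le_add_const [Countable α] [MeasurableSingletonClass α]
    [IsFiniteMeasure μ] (hv : Integrable v μ) (hu : 0 ≤ u) (hc : 0 < c)
    (h : ∀ x, c * u x ≤ v x + C) : Integrable u μ :=
  ((hv.add (integrable_const C)).div_const c).mono'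
    (measurable_of_countable u).aestronglyMeasurable
    (Eventually.of_forall fun x => by
      rw [Real.norm_of_nonneg (hu x), le_div_iff₀ hc, mul_comm]
      exact h x)

lemma integral_le_integral_add_const [IsProbabilityMeasure μ] (hu : Integrable u μ)
    (hv : Integrable v μ) (h : ∀ x, u x ≤ v x + C) : ∫ x, u x ∂μ ≤ ∫ x, v x ∂μ + C :=
  calc ∫ x, u x ∂μ ≤ ∫ x, (v x + C) ∂μ := integral_mono hu (hv.add (integrable_const C)) h
    _ = ∫ x, v x ∂μ + C := by
      rw [integral_add hv (integrable_const C), integral_const, probReal_univ, one_smul]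

end ProbabilityBounds

lemma tendsto_one_div_mul_of_bounds {y : ℕ → ℝ} {L : ℝ} (hL : 0 < L)
    (hup : ∀ a, 0 < a → a < L → ∃ C, ∀ᶠ n : ℕ in atTop, a * y n ≤ n + C)
    (hlow : ∀ b, L < b → ∃ C, ∀ᶠ n : ℕ in atTop, (n : ℝ) ≤ b * y n + C) :
    Tendsto (fun n : ℕ => 1 / (n : ℝ) * y n) atTop (𝓝 (1 / L)) := by
  have hcont : ContinuousAt (fun t : ℝ => 1 / t) L :=
    continuousAt_const.div continuousAt_id hL.ne'
  rw [tendsto_order]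
  constructor
  · intro c hc
    obtain ⟨b, hcb, hLb⟩ : ∃ b, c < 1 / b ∧ L < b :=
      ((hcont.eventually (lt_mem_nhds hc)).filter_mono nhdsWithin_le_nhds
        |>.and (self_mem_nhdsWithin : ∀ᶠ b in 𝓝[>] L, L < b)).exists
    obtain ⟨C, hC⟩ := hlow b hLb
    have hlim : Tendsto (fun n : ℕ => (1 - C / n) / b) atTop (𝓝 (1 / b)) := by
      simpa using ((tendsto_const_div_atTop_nhds_zero_nat C).const_sub 1).div_const b
    filter_upwards [hlim.eventually (lt_mem_nhds hcb), hC, eventually_gt_atTop 0]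
      with n hn hCn hn0
    have hn0' : (0 : ℝ) < n := Nat.cast_pos.2 hn0
    refine hn.trans_le ?_
    rw [div_le_iff₀ (hL.trans hLb), one_sub_div hn0'.ne']
    calc ((n : ℝ) - C) / n ≤ b * y n / n := by gcongr; linarith
      _ = 1 / n * y n * b := by ring
  · intro c hc
    obtain ⟨a, hac, ha⟩ : ∃ a, 1 / a < c ∧ a ∈ Set.Ioo 0 L :=
      ((hcont.eventually (gt_mem_nhds hc)).filter_mono nhdsWithin_le_nhds
        |>.and (Ioo_mem_nhdsLT hL)).exists
    obtain ⟨C, hC⟩ := hup a ha.1 ha.2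
    have hlim : Tendsto (fun n : ℕ => (1 + C / n) / a) atTop (𝓝 (1 / a)) := by
      simpa using ((tendsto_const_div_atTop_nhds_zero_nat C).const_add 1).div_const a
    filter_upwards [hlim.eventually (gt_mem_nhds hac), hC, eventually_gt_atTop 0]
      with n hn hCn hn0
    have hn0' : (0 : ℝ) < n := Nat.cast_pos.2 hn0
    refine lt_of_le_of_lt ?_ hn
    rw [le_div_iff₀ ha.1, one_add_div hn0'.ne']
    calc 1 / n * y n * a = a * y n / n := by ring
      _ ≤ (n + C) / n := by gcongr

theorem stmt_4_general (f : ℤ → ℝ)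
    (L : ℝ) (hL : 0 < L)
    (hlim : Tendsto (fun m : ℤ => f m / (m : ℝ) ^ 2) cofinite (nhds L))
    (ν : ℕ → Measure ℤ) (hprob : ∀ n, IsProbabilityMeasure (ν n))
    (hfint : ∀ n : ℕ, 1 ≤ n → Integrable f (ν n))
    (hmean : ∀ n : ℕ, 1 ≤ n → (∫ m, f m ∂ν n) = n) :
    (∀ n : ℕ, 1 ≤ n → Integrable (fun m : ℤ => (m : ℝ) ^ 2) (ν n)) ∧
      Tendsto (fun n : ℕ => (1 / (n : ℝ)) * ∫ m, (m : ℝ) ^ 2 ∂ν n) atTop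
        (nhds (1 / L)) := by
  have hsq_pos : ∀ᶠ m : ℤ in cofinite, (0 : ℝ) < (m : ℝ) ^ 2 := by
    filter_upwards [(Set.finite_singleton (0 : ℤ)).compl_mem_cofinite] with m hm
    have : (m : ℝ) ≠ 0 := Int.cast_ne_zero.2 hm
    positivity
  have hup (a : ℝ) (ha : a < L) : ∃ C, ∀ m : ℤ, a * (m : ℝ) ^ 2 ≤ f m + C :=
    exists_le_add_const_of_eventually_le_cofinite
      (eventually_mul_le_of_tendsto_div hsq_pos hlim ha)
  have hlow (b : ℝ) (hb : L < b) : ∃ C, ∀ m : ℤ, f m ≤ b * (m : ℝ) ^ 2 + C :=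
    exists_le_add_const_of_eventually_le_cofinite
      (eventually_le_mul_of_tendsto_div hsq_pos hlim hb)
  have hint (n : ℕ) (hn : 1 ≤ n) : Integrable (fun m : ℤ => (m : ℝ) ^ 2) (ν n) := by
    obtain ⟨C, hC⟩ := hup (L / 2) (by linarith)
    exact (hfint n hn).of_const_mul_le_add_const (fun m => sq_nonneg _) (by linarith) hC
  refine ⟨hint, tendsto_one_div_mul_of_bounds hL (fun a _ ha => ?_) (fun b hb => ?_)⟩
  · obtain ⟨C, hC⟩ := hup a ha
    refine ⟨C, eventually_atTop.2 ⟨1, fun n hn => ?_⟩⟩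
    simpa [integral_const_mul, hmean n hn] using
      integral_le_integral_add_const ((hint n hn).const_mul a) (hfint n hn) hC
  · obtain ⟨C, hC⟩ := hlow b hb
    refine ⟨C, eventually_atTop.2 ⟨1, fun n hn => ?_⟩⟩
    simpa [integral_const_mul, hmean n hn] using
      integral_le_integral_add_const (hfint n hn) ((hint n hn).const_mul b) hC

theorem stmt_4 (f : ℤ → ℝ) (hf : ∀ m, 0 ≤ f m)
    (L : ℝ) (hL : 0 < L)
    (hlim : Tendsto (fun m : ℤ => f m / (m : ℝ) ^ 2) cofinite (nhds L))
    (ν : ℕ → Measure ℤ) (hprob : ∀ n, IsProbabilityMeasure (ν n))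
    (hfint : ∀ n : ℕ, 1 ≤ n → Integrable f (ν n))
    (hmean : ∀ n : ℕ, 1 ≤ n → (∫ m, f m ∂ν n) = n) :
    (∀ n : ℕ, 1 ≤ n → Integrable (fun m : ℤ => (m : ℝ) ^ 2) (ν n)) ∧
      Tendsto (fun n : ℕ => (1 / (n : ℝ)) * ∫ m, (m : ℝ) ^ 2 ∂ν n) atTop
        (nhds (1 / L)) :=
  stmt_4_general f L hL hlim ν hprob hfint hmean
end

section
/- Let f : ℤ → ℝ be nonnegative and suppose f(m)/m² tends to +∞ as |m| → ∞. Let (ν_n)_{n≥1} be a sequence of probability measures on ℤ such that f is ν_n-integrable and ∫ f dν_n = n for each n ≥ 1. Then the function m ↦ m² is ν_n-integrable for every n, and (1/n) ∫ m² dν_n(m) → 0 as n → ∞. -/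
open Filter MeasureTheory

theorem stmt_5 (f : ℤ → ℝ) (hf : ∀ m, 0 ≤ f m)
    (hlim : Tendsto (fun m : ℤ => f m / (m : ℝ) ^ 2) cofinite atTop)
    (ν : ℕ → Measure ℤ) (hprob : ∀ n, IsProbabilityMeasure (ν n))
    (hfint : ∀ n : ℕ, 1 ≤ n → Integrable f (ν n))
    (hmean : ∀ n : ℕ, 1 ≤ n → (∫ m, f m ∂ν n) = n) :
    (∀ n : ℕ, 1 ≤ n → Integrable (fun m : ℤ => (m : ℝ) ^ 2) (ν n)) ∧
      Tendsto (fun n : ℕ => (1 / (n : ℝ)) * ∫ m, (m : ℝ) ^ 2 ∂ν n) atTop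
        (nhds 0) := by
  have key : ∀ K : ℝ, 0 < K → ∃ C : ℝ, 0 ≤ C ∧
      ∀ m : ℤ, (m : ℝ) ^ 2 ≤ f m / K + C := by
    intro K hK
    have h : {m : ℤ | ¬ K ≤ f m / (m : ℝ) ^ 2}.Finite := by
      have := hlim.eventually (eventually_ge_atTop K)
      rwa [eventually_cofinite] at this
    refine ⟨∑ m ∈ h.toFinset, (m : ℝ) ^ 2,
      Finset.sum_nonneg fun m _ => sq_nonneg _, ?_⟩
    intro m
    have hC : 0 ≤ ∑ m ∈ h.toFinset, (m : ℝ) ^ 2 :=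
      Finset.sum_nonneg fun m _ => sq_nonneg _
    have hfK : 0 ≤ f m / K := div_nonneg (hf m) hK.le
    by_cases hm : K ≤ f m / (m : ℝ) ^ 2
    · by_cases hm0 : ((m : ℝ)) ^ 2 = 0
      · rw [hm0]; positivity
      · have hm2 : 0 < ((m : ℝ)) ^ 2 := lt_of_le_of_ne (sq_nonneg _) (Ne.symm hm0)
        have h1 : K * (m : ℝ) ^ 2 ≤ f m := (le_div_iff₀ hm2).mp hm
        have : (m : ℝ) ^ 2 ≤ f m / K := (le_div_iff₀ hK).mpr (by linarith)
        linarith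
    · have hmem : m ∈ h.toFinset := by simpa using hm
      have := Finset.single_le_sum (f := fun m : ℤ => (m : ℝ) ^ 2)
        (fun i _ => sq_nonneg _) hmem
      linarith
  obtain ⟨C1, hC1, hb1⟩ := key 1 one_pos
  have hint : ∀ n : ℕ, 1 ≤ n → Integrable (fun m : ℤ => (m : ℝ) ^ 2) (ν n) := by
    intro n hn
    haveI := hprob n
    refine Integrable.mono' (((hfint n hn).div_const 1).add (integrable_const C1))
      ?_ ?_
    · exact (measurable_from_top (f := fun m : ℤ => (m : ℝ) ^ 2)).aestronglyMeasurable
    · filter_upwards with m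
      rw [Real.norm_eq_abs, abs_of_nonneg (sq_nonneg _)]
      exact hb1 m
  refine ⟨hint, ?_⟩
  rw [Metric.tendsto_atTop]
  intro ε hε
  have hK : (0 : ℝ) < 2 / ε := by positivity
  obtain ⟨C, hC, hb⟩ := key (2 / ε) hK
  obtain ⟨N, hN⟩ := (tendsto_natCast_atTop_atTop (R := ℝ)).eventually_ge_atTop
    (2 * C / ε + 1) |>.exists_forall_of_atTop
  refine ⟨max N 1, fun n hn => ?_⟩
  have hn1 : 1 ≤ n := le_trans (le_max_right _ _) hn
  have hnN : N ≤ n := le_trans (le_max_left _ _) hn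
  haveI := hprob n
  have hnpos : (0 : ℝ) < n := by exact_mod_cast hn1
  have hInt2 : Integrable (fun m : ℤ => f m / (2 / ε) + C) (ν n) :=
    ((hfint n hn1).div_const _).add (integrable_const C)
  have hle : (∫ m, (m : ℝ) ^ 2 ∂ν n) ≤ (n : ℝ) / (2 / ε) + C := by
    calc (∫ m, (m : ℝ) ^ 2 ∂ν n) ≤ ∫ m, (f m / (2 / ε) + C) ∂ν n :=
          integral_mono (hint n hn1) hInt2 hb
      _ = (∫ m, f m ∂ν n) / (2 / ε) + C := by
          rw [integral_add ((hfint n hn1).div_const _) (integrable_const C),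
            integral_div, integral_const]
          simp
      _ = (n : ℝ) / (2 / ε) + C := by rw [hmean n hn1]
  have hnonneg : 0 ≤ ∫ m, (m : ℝ) ^ 2 ∂ν n :=
    integral_nonneg fun m => sq_nonneg _
  rw [Real.dist_eq, sub_zero, abs_of_nonneg (by positivity)]
  have hNn : (2 * C / ε + 1 : ℝ) ≤ n := le_trans (hN N le_rfl) (by exact_mod_cast hnN)
  have h1 : (1 / (n : ℝ)) * ∫ m, (m : ℝ) ^ 2 ∂ν n ≤ ((n : ℝ) / (2 / ε) + C) / n := by
    rw [one_div, inv_mul_le_iff₀ hnpos, mul_comm]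
    rw [div_mul_eq_mul_div, le_div_iff₀ hnpos] at *
    · nlinarith
  have h2 : ((n : ℝ) / (2 / ε) + C) / n < ε := by
    have h2C : 2 * C ≤ ((n : ℝ) - 1) * ε := by
      have : 2 * C / ε ≤ (n : ℝ) - 1 := by linarith
      calc 2 * C = 2 * C / ε * ε := by field_simp
        _ ≤ ((n : ℝ) - 1) * ε := mul_le_mul_of_nonneg_right this hε.le
    rw [div_lt_iff₀ hnpos, div_div_eq_mul_div]
    linarith
  exact lt_of_le_of_lt h1 h2
end

section
/- Let (Ω, 𝒜, μ) be a probability space, T : Ω → Ω an invertible, ergodic, μ-preserving transformation, and c : Ω → ℝ a measurable function with c > 0 μ-a.e.; set c̄ = c + c∘T^{−1}. Assume both c and 1/c are μ-integrable. For ω ∈ Ω, let (X_n)_{n≥0} be the random walk on ℤ with X_0 = 0 which from state k jumps to k−1 with probability c(T^{k−1}ω)/c̄(T^kω) and to k+1 with probability c(T^kω)/c̄(T^kω), and let E_ω denote expectation over the walk for fixed ω. Then for μ-almost every ω, lim_{n→∞} E_ω(X_n²)/n = [ (∫_Ω c dμ)(∫_Ω (1/c) dμ) ]^{−1}. -/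
open Finset Filter MeasureTheory

/-- Law of the random walk on `ℤ` among conductances `c`, started at `0`:
from state `k` it jumps to `k-1` with probability `c (k-1) / (c k + c (k-1))`
and to `k+1` with probability `c k / (c k + c (k-1))`. -/
noncomputable def walkLaw (c : ℤ → ℝ) : ℕ → ℤ → ℝ
  | 0, m => if m = 0 then 1 else 0
  | n + 1, m =>
      walkLaw c n (m + 1) * (c m / (c (m + 1) + c m)) +
        walkLaw c n (m - 1) * (c (m - 1) / (c (m - 1) + c (m - 2)))

/-- The `k`-th iterate (`k : ℤ`) of an invertible transformation `T`. -/
def zIter {Ω : Type*} [MeasurableSpace Ω] (T : Ω ≃ᵐ Ω) (k : ℤ) (ω : Ω) : Ω :=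
  if 0 ≤ k then T^[k.toNat] ω else T.symm^[(-k).toNat] ω

/-!
In the environment `c`, the walk is a martingale in the harmonic coordinate
`H k = ∑_{0 ≤ j < k} 1 / c j`, and `H(X)²` has drift
`g k = (1 / c k + 1 / c (k-1)) / (c k + c (k-1))`. An explicit corrector `ψ` with drift
`g - γ`, `γ = (∫ 1/c) / (∫ c)`, makes `H² - ψ` have constant drift `γ`, whence
`E_ω (H(X_n)² - ψ(X_n)) = γ n` exactly. Birkhoff's ergodic theorem (proved from Garsia's
maximal inequality), applied to `T` and `T⁻¹`, gives `H k = b k + o(k)` and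
`∑_{0 ≤ j < k} c j = a k + o(k)` with `a = ∫ c`, `b = ∫ 1/c`; hence `ψ = o(k²)` and
`H² = b² k² + o(k²)`. So `b² E_ω X_n² = γ n + o(E_ω X_n²) + O(1)`, which forces
`E_ω X_n² / n → γ / b² = 1 / (a b)`.
-/

open Asymptotics Topology

section Birkhoff

variable {α : Type*} {T : α → α} {f : α → ℝ}

/-- `maxBirkhoffSum T f N x = max_{n ≤ N} birkhoffSum T f n x`, computed by Garsia's recursion. -/
noncomputable def maxBirkhoffSum (T : α → α) (f : α → ℝ) : ℕ → α → ℝ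
  | 0 => 0
  | N + 1 => fun x => max 0 (f x + maxBirkhoffSum T f N (T x))

lemma maxBirkhoffSum_nonneg : ∀ N x, 0 ≤ maxBirkhoffSum T f N x
  | 0, _ => le_rfl
  | _ + 1, _ => le_max_left _ _

lemma maxBirkhoffSum_le_succ : ∀ N x, maxBirkhoffSum T f N x ≤ maxBirkhoffSum T f (N + 1) x
  | 0, x => maxBirkhoffSum_nonneg 1 x
  | N + 1, x => max_le_max le_rfl (by linarith [maxBirkhoffSum_le_succ N (T x)])

lemma birkhoffSum_le_maxBirkhoffSum : ∀ {n N : ℕ}, n ≤ N → ∀ x,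
    birkhoffSum T f n x ≤ maxBirkhoffSum T f N x
  | 0, N, _, x => by rw [birkhoffSum_zero]; exact maxBirkhoffSum_nonneg N x
  | n + 1, N + 1, h, x => by
    rw [birkhoffSum_succ']
    have := birkhoffSum_le_maxBirkhoffSum (Nat.le_of_succ_le_succ h) (T x)
    exact le_max_of_le_right (by linarith)

lemma preimage_setOf_birkhoffSum_unbounded :
    T ⁻¹' {x | ∀ M : ℝ, ∃ n, M < birkhoffSum T f n x} =
      {x | ∀ M : ℝ, ∃ n, M < birkhoffSum T f n x} := by
  ext x
  constructor
  · intro h M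
    obtain ⟨n, hn⟩ := h (M - f x)
    exact ⟨n + 1, by rw [birkhoffSum_succ']; linarith⟩
  · intro h M
    obtain ⟨n, hn⟩ := h (max 0 (M + f x))
    cases n with
    | zero => simp at hn
    | succ n =>
      rw [birkhoffSum_succ'] at hn
      exact ⟨n, by linarith [le_max_right 0 (M + f x)]⟩

variable [MeasurableSpace α] {μ : Measure α}

lemma measurable_maxBirkhoffSum (hT : Measurable T) (hf : Measurable f) :
    ∀ N, Measurable (maxBirkhoffSum T f N)
  | 0 => measurable_const
  | N + 1 => measurable_const.max (hf.add ((measurable_maxBirkhoffSum hT hf N).comp hT))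

lemma integrable_maxBirkhoffSum (hT : MeasurePreserving T μ μ) (hf : Integrable f μ) :
    ∀ N, Integrable (maxBirkhoffSum T f N) μ
  | 0 => integrable_zero α ℝ μ
  | N + 1 => (integrable_zero α ℝ μ).sup
      (hf.add (hT.integrable_comp_of_integrable (integrable_maxBirkhoffSum hT hf N)))

theorem setIntegral_maxBirkhoffSum_pos_nonneg (hT : MeasurePreserving T μ μ) (hfm : Measurable f)
    (hf : Integrable f μ) (N : ℕ) :
    0 ≤ ∫ x in {x | 0 < maxBirkhoffSum T f N x}, f x ∂μ := by
  -- On `A`, `M = f + M_{N-1} ∘ T ≤ f + M ∘ T`; off `A`, `M = 0 ≤ M ∘ T`.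
  set M := maxBirkhoffSum T f N
  set A := {x | 0 < M x}
  have hA : MeasurableSet A :=
    measurableSet_lt measurable_const (measurable_maxBirkhoffSum hT.measurable hfm N)
  have hM := integrable_maxBirkhoffSum hT hf N
  have hMT : Integrable (fun x => M (T x)) μ := hT.integrable_comp_of_integrable hM
  have hpointwise : ∀ x ∈ A, M x - M (T x) ≤ f x := fun x hx => by
    cases N with
    | zero => exact absurd hx (by simp [A, M, maxBirkhoffSum])
    | succ N =>
      have hpos : 0 < f x + maxBirkhoffSum T f N (T x) := by
        by_contra h
        exact absurd hx (by simp [A, M, maxBirkhoffSum, not_lt.1 h])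
      have hx' : maxBirkhoffSum T f (N + 1) x = f x + maxBirkhoffSum T f N (T x) :=
        max_eq_right hpos.le
      have := maxBirkhoffSum_le_succ (T := T) (f := f) N (T x)
      simp only [M]
      linarith
  have hMA : ∫ x in A, M x ∂μ = ∫ x, M x ∂μ :=
    setIntegral_eq_integral_of_forall_compl_eq_zero fun x hx =>
      le_antisymm (not_lt.1 hx) (maxBirkhoffSum_nonneg N x)
  have hMTA : ∫ x in A, M (T x) ∂μ ≤ ∫ x, M x ∂μ := by
    have hinv : ∫ x, M (T x) ∂μ = ∫ x, M x ∂μ := by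
      rw [← integral_map hT.measurable.aemeasurable
        (by rw [hT.map_eq]; exact hM.aestronglyMeasurable), hT.map_eq]
    rw [← hinv]
    exact setIntegral_le_integral hMT (.of_forall fun x => maxBirkhoffSum_nonneg N (T x))
  have := setIntegral_mono_on (hM.sub hMT).integrableOn hf.integrableOn hA hpointwise
  simp only [Pi.sub_apply] at this
  rw [integral_sub hM.integrableOn hMT.integrableOn, hMA] at this
  linarith

lemma measurableSet_setOf_birkhoffSum_unbounded (hT : Measurable T) (hf : Measurable f) :
    MeasurableSet {x | ∀ M : ℝ, ∃ n, M < birkhoffSum T f n x} := by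
  have hS : ∀ n, Measurable (birkhoffSum T f n) := fun n =>
    Finset.measurable_sum _ fun k _ => hf.comp (hT.iterate k)
  have : {x | ∀ M : ℝ, ∃ n, M < birkhoffSum T f n x} =
      ⋂ M : ℕ, ⋃ n, {x | (M : ℝ) < birkhoffSum T f n x} := by
    ext x
    simp only [Set.mem_iInter, Set.mem_iUnion]
    refine ⟨fun h M => h M, fun h M => ?_⟩
    obtain ⟨n, hn⟩ := h ⌈M⌉₊
    exact ⟨n, (Nat.le_ceil M).trans_lt hn⟩
  rw [this]
  exact .iInter fun M => .iUnion fun n => measurableSet_lt measurable_const (hS n)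

lemma measure_setOf_birkhoffSum_unbounded [IsProbabilityMeasure μ] (hT : Ergodic T μ)
    (hfm : Measurable f) (hf : Integrable f μ) (hneg : ∫ x, f x ∂μ < 0) :
    μ {x | ∀ M : ℝ, ∃ n, M < birkhoffSum T f n x} = 0 := by
  set U := {x | ∀ M : ℝ, ∃ n, M < birkhoffSum T f n x}
  have hU := measurableSet_setOf_birkhoffSum_unbounded hT.measurable hfm
  refine (hT.prob_eq_zero_or_one hU preimage_setOf_birkhoffSum_unbounded).resolve_right
    fun hU1 => ?_
  set A : ℕ → Set α := fun N => {x | 0 < maxBirkhoffSum T f N x}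
  have hA : ∀ N, MeasurableSet (A N) := fun N =>
    measurableSet_lt measurable_const (measurable_maxBirkhoffSum hT.measurable hfm N)
  have hAmono : Monotone A := monotone_nat_of_le_succ fun N x hx =>
    lt_of_lt_of_le hx (maxBirkhoffSum_le_succ N x)
  have hUA : U ⊆ ⋃ N, A N := fun x hx => by
    obtain ⟨n, hn⟩ := hx 0
    exact Set.mem_iUnion.2 ⟨n, hn.trans_le (birkhoffSum_le_maxBirkhoffSum le_rfl x)⟩
  have hae : ∀ᵐ x ∂μ, x ∈ ⋃ N, A N :=
    (ae_iff.2 ((prob_compl_eq_zero_iff hU).2 hU1)).mono fun x hx => hUA hx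
  have hlim := tendsto_setIntegral_of_monotone hA hAmono hf.integrableOn
  rw [Measure.restrict_eq_self_of_ae_mem hae] at hlim
  have := ge_of_tendsto' hlim fun N =>
    setIntegral_maxBirkhoffSum_pos_nonneg hT.toMeasurePreserving hfm hf N
  linarith

lemma ae_eventually_birkhoffAverage_lt [IsProbabilityMeasure μ] (hT : Ergodic T μ)
    (hfm : Measurable f) (hf : Integrable f μ) :
    ∀ᵐ x ∂μ, ∀ t, ∫ y, f y ∂μ < t →
      ∀ᶠ n in atTop, birkhoffAverage ℝ T f n x < t := by
  have hbdd : ∀ᵐ x ∂μ, ∀ q : ℚ, ∫ y, f y ∂μ < q →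
      ∃ M : ℝ, ∀ n, birkhoffSum T (fun y => f y - q) n x ≤ M := by
    refine ae_all_iff.2 fun q => ?_
    by_cases hq : ∫ y, f y ∂μ < q
    · have := measure_setOf_birkhoffSum_unbounded hT (hfm.sub_const q)
        (hf.sub (integrable_const _)) (by rw [integral_sub hf (integrable_const _)]; simpa using hq)
      filter_upwards [measure_eq_zero_iff_ae_notMem.1 this] with x hx _
      simpa using hx
    · exact .of_forall fun x h => absurd h hq
  filter_upwards [hbdd] with x hx t ht
  obtain ⟨q, hq, hqt⟩ := exists_rat_btwn ht
  obtain ⟨M, hM⟩ := hx q hq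
  filter_upwards [(tendsto_const_div_atTop_nhds_zero_nat M).eventually
    (gt_mem_nhds (sub_pos.2 hqt)), eventually_gt_atTop 0] with n hn hn0
  have hSn : birkhoffSum T f n x ≤ q * n + M := by
    have := hM n
    simp only [birkhoffSum, sum_sub_distrib, sum_const, card_range, nsmul_eq_mul] at this
    rw [birkhoffSum]
    linarith
  have hn0' : (0 : ℝ) < n := by exact_mod_cast hn0
  rw [birkhoffAverage, smul_eq_mul, inv_mul_eq_div, div_lt_iff₀ hn0']
  rw [div_lt_iff₀ hn0'] at hn
  nlinarith

theorem ae_tendsto_birkhoffAverage [IsProbabilityMeasure μ] (hT : Ergodic T μ)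
    (hfm : Measurable f) (hf : Integrable f μ) :
    ∀ᵐ x ∂μ, Tendsto (fun n => birkhoffAverage ℝ T f n x) atTop
      (𝓝 (∫ y, f y ∂μ)) := by
  filter_upwards [ae_eventually_birkhoffAverage_lt hT hfm hf,
    ae_eventually_birkhoffAverage_lt hT hfm.neg hf.neg] with x hup hdown
  refine tendsto_order.2 ⟨fun t ht => ?_, hup⟩
  filter_upwards [hdown (-t) (by simp only [Pi.neg_apply, integral_neg]; linarith)] with n hn
  rw [birkhoffAverage_neg] at hn
  simp only [Pi.neg_apply] at hn
  linarith

end Birkhoff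

lemma Asymptotics.IsLittleO.exists_abs_le_mul_add {α : Type*} {f g : α → ℝ}
    (h : f =o[cofinite] g) {ε : ℝ} (hε : 0 < ε) : ∃ C, ∀ x, |f x| ≤ ε * |g x| + C := by
  obtain ⟨C, hC⟩ := (eventually_cofinite.1 (h.def hε)).image (fun x => |f x|) |>.bddAbove
  refine ⟨max C 0, fun x => ?_⟩
  by_cases hx : ‖f x‖ ≤ ε * ‖g x‖
  · have := le_max_right C 0
    simp only [Real.norm_eq_abs] at hx
    linarith
  · have := hC ⟨x, hx, rfl⟩
    have := le_max_left C 0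
    nlinarith [abs_nonneg (g x)]

lemma eventually_le_abs_intCast (R : ℝ) : ∀ᶠ k : ℤ in cofinite, R ≤ |(k : ℝ)| := by
  have := tendsto_norm_cocompact_atTop (E := ℤ)
  rw [cocompact_eq_cofinite] at this
  simpa [Int.norm_eq_abs] using this.eventually_ge_atTop R

lemma isBigO_intCast_add_one :
    (fun k : ℤ => ((k + 1 : ℤ) : ℝ)) =O[cofinite] (fun k : ℤ => (k : ℝ)) := by
  refine .of_bound 2 ?_
  filter_upwards [eventually_le_abs_intCast 1] with k hk
  simp only [Real.norm_eq_abs, Int.cast_add, Int.cast_one]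
  linarith [abs_add_le (k : ℝ) 1, abs_one (α := ℝ)]

lemma Asymptotics.IsLittleO.comp_add_one {f : ℤ → ℝ}
    (h : f =o[cofinite] (fun k : ℤ => (k : ℝ))) :
    (fun k => f (k + 1)) =o[cofinite] (fun k : ℤ => (k : ℝ)) :=
  (h.comp_tendsto (add_left_injective 1).tendsto_cofinite).trans_isBigO isBigO_intCast_add_one

lemma tendsto_cofinite_of_natCast_of_neg_natCast {β : Type*} {φ : ℤ → β} {l : Filter β}
    (hp : Tendsto (fun n : ℕ => φ n) atTop l) (hm : Tendsto (fun n : ℕ => φ (-n)) atTop l) :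
    Tendsto φ cofinite l := by
  rw [Int.cofinite_eq, tendsto_sup, ← tendsto_comp_neg_atTop_iff, ← Nat.map_cast_int_atTop,
    tendsto_map'_iff, tendsto_map'_iff]
  exact ⟨hm, hp⟩

lemma tendsto_div_of_forall_abs_sub_le {x : ℕ → ℝ} {β γ : ℝ} (hβ : 0 < β)
    (hx : ∀ n, 0 ≤ x n) (h : ∀ ε > 0, ∃ C, ∀ n, |β * x n - γ * n| ≤ ε * x n + C) :
    Tendsto (fun n => x n / n) atTop (𝓝 (γ / β)) := by
  have hxO : x =O[atTop] (fun n => (n : ℝ)) := by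
    obtain ⟨C, hC⟩ := h (β / 2) (half_pos hβ)
    refine .of_bound (2 / β * (|γ| + 1)) ?_
    filter_upwards [eventually_ge_atTop ⌈C⌉₊] with n hn
    have hCn : C ≤ n := (Nat.le_ceil C).trans (by exact_mod_cast hn)
    have := (abs_le.1 (hC n)).2
    rw [Real.norm_eq_abs, Real.norm_eq_abs, abs_of_nonneg (hx n), Nat.abs_cast,
      show 2 / β * (|γ| + 1) * n = 2 * ((|γ| + 1) * n) / β by ring, le_div_iff₀ hβ]
    nlinarith [le_abs_self γ, (n.cast_nonneg : (0 : ℝ) ≤ n)]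
  have hlittle : (fun n => β * x n - γ * n) =o[atTop] (fun n => (n : ℝ)) := by
    refine Asymptotics.isLittleO_iff.2 fun ε hε => ?_
    obtain ⟨K, hK, hKx⟩ := hxO.exists_pos
    obtain ⟨C, hC⟩ := h (ε / (2 * K)) (by positivity)
    filter_upwards [hKx.bound, eventually_ge_atTop ⌈2 * C / ε⌉₊] with n hxn hn
    have hCn : 2 * C / ε ≤ n := (Nat.le_ceil _).trans (by exact_mod_cast hn)
    rw [div_le_iff₀ hε] at hCn
    rw [Real.norm_eq_abs, abs_of_nonneg (hx n)] at hxn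
    rw [Real.norm_eq_abs, Real.norm_eq_abs, Nat.abs_cast] at *
    have : ε / (2 * K) * x n ≤ ε / 2 * n := by
      calc ε / (2 * K) * x n ≤ ε / (2 * K) * (K * n) := by gcongr
        _ = ε / 2 * n := by field_simp
    linarith [hC n]
  have hlim := (hlittle.tendsto_div_nhds_zero.const_add γ).div_const β
  rw [add_zero] at hlim
  refine hlim.congr' ?_
  filter_upwards [eventually_ne_atTop 0] with n hn
  field_simp
  ring

noncomputable def signedSum (u : ℤ → ℝ) (k : ℤ) : ℝ :=
  ∑ j ∈ Ico 0 k, u j - ∑ j ∈ Ico k 0, u j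

section SignedSum

variable (u : ℤ → ℝ)

@[simp] lemma signedSum_zero : signedSum u 0 = 0 := by simp [signedSum]

lemma signedSum_succ (k : ℤ) : signedSum u (k + 1) = signedSum u k + u k := by
  rcases le_or_gt 0 k with hk | hk
  · rw [signedSum, signedSum, ← sum_Ico_add_eq_sum_Ico_add_one hk, Ico_eq_empty_of_le hk,
      Ico_eq_empty_of_le (show (0 : ℤ) ≤ k + 1 by omega), sum_empty, sub_zero, sub_zero]
  · rw [signedSum, signedSum, ← insert_Ico_add_one_left_eq_Ico hk, sum_insert (by simp),
      Ico_eq_empty_of_le hk.le, Ico_eq_empty_of_le (show k + 1 ≤ 0 by omega), sum_empty]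
    ring

lemma signedSum_sub_one (k : ℤ) : signedSum u (k - 1) = signedSum u k - u (k - 1) := by
  rw [eq_sub_iff_add_eq, ← signedSum_succ, sub_add_cancel]

lemma signedSum_natCast (n : ℕ) : signedSum u n = ∑ j ∈ range n, u j := by
  induction n with
  | zero => simp
  | succ n ih => rw [Nat.cast_succ, signedSum_succ, ih, sum_range_succ]

lemma signedSum_neg_natCast (n : ℕ) :
    signedSum u (-n) = -∑ j ∈ range n, u (-(j + 1)) := by
  induction n with
  | zero => simp
  | succ n ih =>
    rw [sum_range_succ, neg_add, ← ih, Nat.cast_succ, neg_add', signedSum_sub_one]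
    ring_nf

lemma signedSum_of_nonneg {k : ℤ} (hk : 0 ≤ k) : signedSum u k = ∑ j ∈ Ico 0 k, u j := by
  simp [signedSum, hk]

lemma signedSum_of_neg {k : ℤ} (hk : k < 0) : signedSum u k = -∑ j ∈ Ico k 0, u j := by
  simp [signedSum, hk.le]

end SignedSum

lemma signedSum_sub_const_mul (u v : ℤ → ℝ) (γ : ℝ) (k : ℤ) :
    signedSum (fun j => u j - γ * v j) k = signedSum u k - γ * signedSum v k := by
  simp only [signedSum, sum_sub_distrib, ← mul_sum]
  ring

lemma abs_signedSum_mul_le {F w : ℤ → ℝ} (hw : ∀ j, 0 ≤ w j) {k : ℤ} {B : ℝ}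
    (hB : ∀ j, |j| ≤ |k| → |F j| ≤ B) :
    |signedSum (fun j => F j * w j) k| ≤ B * |signedSum w k| := by
  have key : ∀ s : Finset ℤ, (∀ j ∈ s, |j| ≤ |k|) →
      |∑ j ∈ s, F j * w j| ≤ B * |∑ j ∈ s, w j| := fun s hs => by
    rw [abs_of_nonneg (sum_nonneg fun j _ => hw j), mul_sum]
    refine (abs_sum_le_sum_abs _ _).trans (sum_le_sum fun j hj => ?_)
    rw [abs_mul, abs_of_nonneg (hw j)]
    exact mul_le_mul_of_nonneg_right (hB j (hs j hj)) (hw j)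
  rcases le_or_gt 0 k with hk | hk
  · rw [signedSum_of_nonneg _ hk, signedSum_of_nonneg _ hk]
    exact key _ fun j hj => by rw [mem_Ico] at hj; rw [abs_le, abs_of_nonneg hk]; omega
  · rw [signedSum_of_neg _ hk, signedSum_of_neg _ hk, abs_neg, abs_neg]
    exact key _ fun j hj => by rw [mem_Ico] at hj; rw [abs_le, abs_of_neg hk]; omega

lemma isLittleO_signedSum_mul {F w : ℤ → ℝ} (hw : ∀ j, 0 ≤ w j)
    (hF : F =o[cofinite] (fun k : ℤ => (k : ℝ)))
    (hW : signedSum w =O[cofinite] (fun k : ℤ => (k : ℝ))) :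
    signedSum (fun j => F j * w j) =o[cofinite] (fun k : ℤ => (k : ℝ) ^ 2) := by
  refine Asymptotics.isLittleO_iff.2 fun ε hε => ?_
  obtain ⟨M, hM, hMW⟩ := hW.exists_pos
  obtain ⟨C, hC⟩ := hF.exists_abs_le_mul_add (div_pos hε (mul_pos two_pos hM))
  filter_upwards [hMW.bound, eventually_le_abs_intCast (2 * M * C / ε)] with k hWk hk
  simp only [Real.norm_eq_abs, abs_pow, sq_abs] at hWk ⊢
  have hB : ∀ j, |j| ≤ |k| → |F j| ≤ ε / (2 * M) * |(k : ℝ)| + C := fun j hj => by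
    have : |(j : ℝ)| ≤ |(k : ℝ)| := by exact_mod_cast hj
    have := hC j
    have : 0 ≤ ε / (2 * M) := by positivity
    nlinarith
  have hCk : C ≤ ε / (2 * M) * |(k : ℝ)| := by
    rw [div_le_iff₀ hε] at hk
    rw [div_mul_eq_mul_div, le_div_iff₀ (by positivity)]
    linarith
  calc |signedSum (fun j => F j * w j) k|
      ≤ (ε / (2 * M) * |(k : ℝ)| + C) * |signedSum w k| := abs_signedSum_mul_le hw hB
    _ ≤ (ε / M * |(k : ℝ)|) * (M * |(k : ℝ)|) := by
        refine mul_le_mul ?_ hWk (abs_nonneg _) (by positivity)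
        have : ε / (2 * M) * |(k : ℝ)| * 2 = ε / M * |(k : ℝ)| := by field_simp
        linarith
    _ = ε * (k : ℝ) ^ 2 := by field_simp; rw [sq_abs]

lemma isLittleO_signedSum_sub_mul {u : ℤ → ℝ} {a : ℝ}
    (hp : Tendsto (fun n : ℕ => signedSum u n / n) atTop (𝓝 a))
    (hm : Tendsto (fun n : ℕ => -signedSum u (-n) / n) atTop (𝓝 a)) :
    (fun k => signedSum u k - a * k) =o[cofinite] (fun k : ℤ => (k : ℝ)) := by
  have hlim : Tendsto (fun k : ℤ => signedSum u k / k) cofinite (𝓝 a) :=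
    tendsto_cofinite_of_natCast_of_neg_natCast (by simpa using hp)
      (by simpa only [Int.cast_neg, Int.cast_natCast, div_neg, neg_div] using hm)
  refine (Asymptotics.isLittleO_iff_tendsto' ?_).2 ?_
  · filter_upwards with k hk
    simp [Int.cast_eq_zero.1 hk]
  · refine (sub_self a ▸ hlim.sub_const a).congr' ?_
    filter_upwards [eventually_cofinite_ne 0] with k hk
    field_simp

noncomputable def walkExp (c : ℤ → ℝ) (n : ℕ) (f : ℤ → ℝ) : ℝ :=
  ∑ m ∈ Icc (-(n : ℤ)) n, walkLaw c n m * f m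

noncomputable def walkStep (c : ℤ → ℝ) (f : ℤ → ℝ) (k : ℤ) : ℝ :=
  c (k - 1) / (c k + c (k - 1)) * f (k - 1) + c k / (c k + c (k - 1)) * f (k + 1)

section Walk

variable (c : ℤ → ℝ)

lemma walkLaw_eq_zero {n : ℕ} {m : ℤ} (hm : (n : ℤ) < |m|) : walkLaw c n m = 0 := by
  induction n generalizing m with
  | zero => simp_all [walkLaw]
  | succ n ih =>
    push_cast at hm
    rw [walkLaw, ih (by rw [lt_abs] at hm ⊢; omega), ih (by rw [lt_abs] at hm ⊢; omega),
      zero_mul, zero_mul, add_zero]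

lemma walkLaw_nonneg (hc : ∀ k, 0 < c k) (n : ℕ) (m : ℤ) : 0 ≤ walkLaw c n m := by
  induction n generalizing m with
  | zero => unfold walkLaw; split_ifs <;> norm_num
  | succ n ih =>
    have hp : ∀ k, 0 ≤ c k / (c (k + 1) + c k) := fun k =>
      div_nonneg (hc k).le (add_pos (hc _) (hc _)).le
    have hq : 0 ≤ c (m - 1) / (c (m - 1) + c (m - 2)) :=
      div_nonneg (hc _).le (add_pos (hc _) (hc _)).le
    rw [walkLaw]
    exact add_nonneg (mul_nonneg (ih _) (hp m)) (mul_nonneg (ih _) hq)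

lemma walkExp_add (n : ℕ) (f g : ℤ → ℝ) :
    walkExp c n (fun k => f k + g k) = walkExp c n f + walkExp c n g := by
  simp only [walkExp, mul_add, sum_add_distrib]

lemma walkExp_sub (n : ℕ) (f g : ℤ → ℝ) :
    walkExp c n (fun k => f k - g k) = walkExp c n f - walkExp c n g := by
  simp only [walkExp, mul_sub, sum_sub_distrib]

lemma walkExp_const_mul (n : ℕ) (a : ℝ) (f : ℤ → ℝ) :
    walkExp c n (fun k => a * f k) = a * walkExp c n f := by
  simp only [walkExp, mul_sum, mul_left_comm]

lemma sum_walkLaw_shift (n : ℕ) {d : ℤ} (hd : |d| ≤ 1) (g : ℤ → ℝ) :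
    ∑ m ∈ Icc (-(n + 1 : ℤ)) (n + 1), walkLaw c n (m + d) * g m =
      walkExp c n (fun k => g (k - d)) := by
  have hsupp : ∀ {k : ℤ}, walkLaw c n k ≠ 0 → -(n : ℤ) ≤ k ∧ k ≤ n := fun hk =>
    abs_le.1 (not_lt.1 fun h => hk (walkLaw_eq_zero c h))
  rw [abs_le] at hd
  refine sum_bij_ne_zero (fun m _ _ => m + d) (fun m _ hm => ?_) (fun _ _ _ _ _ _ h => ?_)
    (fun k _ hk => ⟨k - d, ?_, ?_, ?_⟩) (fun m _ _ => by simp)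
  · have := hsupp (left_ne_zero_of_mul hm); simp only [mem_Icc]; omega
  · exact add_right_cancel h
  · have := hsupp (left_ne_zero_of_mul hk); simp only [mem_Icc]; omega
  · simpa using hk
  · simp

lemma walkExp_succ (n : ℕ) (f : ℤ → ℝ) :
    walkExp c (n + 1) f = walkExp c n (walkStep c f) := by
  have hsplit : walkExp c (n + 1) f =
      ∑ m ∈ Icc (-(n + 1 : ℤ)) (n + 1),
        walkLaw c n (m + 1) * (c m / (c (m + 1) + c m) * f m) +
      ∑ m ∈ Icc (-(n + 1 : ℤ)) (n + 1),
        walkLaw c n (m + -1) * (c (m - 1) / (c (m - 1) + c (m - 2)) * f m) := by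
    rw [walkExp, ← sum_add_distrib, Nat.cast_succ]
    refine sum_congr rfl fun m _ => ?_
    rw [walkLaw, ← sub_eq_add_neg]
    ring
  rw [hsplit, sum_walkLaw_shift c n (by norm_num), sum_walkLaw_shift c n (by norm_num),
    ← walkExp_add]
  congr 1; ext k
  simp only [walkStep, sub_neg_eq_add, sub_add_cancel, add_sub_cancel_right,
    show k + 1 - 2 = k - 1 by ring]

lemma walkExp_mono (hc : ∀ k, 0 < c k) (n : ℕ) {f g : ℤ → ℝ} (h : ∀ k, f k ≤ g k) :
    walkExp c n f ≤ walkExp c n g :=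
  sum_le_sum fun m _ => mul_le_mul_of_nonneg_left (h m) (walkLaw_nonneg c hc n m)

lemma abs_walkExp_le (hc : ∀ k, 0 < c k) (n : ℕ) {f g : ℤ → ℝ}
    (h : ∀ k, |f k| ≤ g k) : |walkExp c n f| ≤ walkExp c n g := by
  calc |walkExp c n f| ≤ walkExp c n (fun k => |f k|) :=
        (abs_sum_le_sum_abs _ _).trans_eq <| sum_congr rfl fun m _ => by
          rw [abs_mul, abs_of_nonneg (walkLaw_nonneg c hc n m)]
    _ ≤ walkExp c n g := walkExp_mono c hc n h

lemma walkExp_const (hc : ∀ k, 0 < c k) (n : ℕ) (a : ℝ) : walkExp c n (fun _ => a) = a := by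
  induction n with
  | zero => simp [walkExp, walkLaw]
  | succ n ih =>
    rw [walkExp_succ]
    convert ih using 2
    ext k
    have : c k + c (k - 1) ≠ 0 := (add_pos (hc _) (hc _)).ne'
    simp only [walkStep]
    field_simp
    ring

lemma walkExp_of_walkStep_eq_add_const (hc : ∀ k, 0 < c k) {f : ℤ → ℝ} {γ : ℝ}
    (hf : ∀ k, walkStep c f k = f k + γ) (n : ℕ) : walkExp c n f = f 0 + γ * n := by
  induction n with
  | zero => simp [walkExp, walkLaw]
  | succ n ih =>
    rw [walkExp_succ, funext hf, walkExp_add, ih, walkExp_const c hc, Nat.cast_succ]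
    ring

end Walk

noncomputable def harmonicCoord (c : ℤ → ℝ) : ℤ → ℝ :=
  signedSum fun j => (c j)⁻¹

-- With `γ = b / a` the primitive `S` below is `o(k)`; the increments `(S j + S (j + 1)) / c j`
-- make the drift of the corrector equal to that of `harmonicCoord c ^ 2`, minus `γ`.
noncomputable def corrector (c : ℤ → ℝ) (γ : ℝ) : ℤ → ℝ :=
  let S := signedSum fun i => (c i)⁻¹ - γ * c i
  signedSum fun j => (S j + S (j + 1)) / c j

section Generator

variable {c : ℤ → ℝ} (hc : ∀ k, 0 < c k)
include hc

lemma walkStep_signedSum_div (u : ℤ → ℝ) (k : ℤ) :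
    walkStep c (signedSum fun j => u j / c j) k =
      signedSum (fun j => u j / c j) k + (u k - u (k - 1)) / (c k + c (k - 1)) := by
  have := (hc k).ne'; have := (hc (k - 1)).ne'; have := (add_pos (hc k) (hc (k - 1))).ne'
  rw [walkStep, signedSum_succ, signedSum_sub_one]
  field_simp
  ring

lemma walkStep_sq_harmonicCoord (k : ℤ) :
    walkStep c (fun j => harmonicCoord c j ^ 2) k =
      harmonicCoord c k ^ 2 + ((c k)⁻¹ + (c (k - 1))⁻¹) / (c k + c (k - 1)) := by
  have := (hc k).ne'; have := (hc (k - 1)).ne'; have := (add_pos (hc k) (hc (k - 1))).ne'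
  rw [walkStep, harmonicCoord, signedSum_succ, signedSum_sub_one]
  field_simp
  ring

lemma walkStep_corrector (γ : ℝ) (k : ℤ) :
    walkStep c (corrector c γ) k =
      corrector c γ k + ((c k)⁻¹ + (c (k - 1))⁻¹) / (c k + c (k - 1)) - γ := by
  have := (hc k).ne'; have := (hc (k - 1)).ne'; have := (add_pos (hc k) (hc (k - 1))).ne'
  set g : ℤ → ℝ := fun i => (c i)⁻¹ - γ * c i
  have hincr : signedSum g k + signedSum g (k + 1) - (signedSum g (k - 1) + signedSum g (k - 1 + 1))
      = g k + g (k - 1) := by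
    rw [sub_add_cancel, signedSum_succ, signedSum_sub_one]
    ring
  rw [corrector, walkStep_signedSum_div hc, hincr, add_sub_assoc]
  congr 1
  simp only [g]
  field_simp
  ring

lemma walkExp_sq_harmonicCoord_sub_corrector (γ : ℝ) (n : ℕ) :
    walkExp c n (fun k => harmonicCoord c k ^ 2 - corrector c γ k) = γ * n := by
  have hdrift : ∀ k, walkStep c (fun k => harmonicCoord c k ^ 2 - corrector c γ k) k =
      harmonicCoord c k ^ 2 - corrector c γ k + γ := fun k => by
    have h₁ := walkStep_sq_harmonicCoord hc k
    have h₂ := walkStep_corrector hc γ k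
    simp only [walkStep] at *
    linarith
  rw [walkExp_of_walkStep_eq_add_const c hc hdrift n]
  simp [harmonicCoord, corrector]

end Generator

theorem tendsto_walkExp_sq_div {c : ℤ → ℝ} (hc : ∀ k, 0 < c k) {a b : ℝ}
    (ha : 0 < a) (hb : 0 < b)
    (hA : (fun k => signedSum c k - a * k) =o[cofinite] (fun k : ℤ => (k : ℝ)))
    (hB : (fun k => harmonicCoord c k - b * k) =o[cofinite] (fun k : ℤ => (k : ℝ))) :
    Tendsto (fun n : ℕ => walkExp c n (fun m => (m : ℝ) ^ 2) / n) atTop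
      (𝓝 (a * b)⁻¹) := by
  set γ := b / a
  have hγa : γ * a = b := div_mul_cancel₀ b ha.ne'
  have hH : harmonicCoord c =O[cofinite] (fun k : ℤ => (k : ℝ)) := by
    simpa using
      hB.isBigO.add ((Asymptotics.isBigO_refl (fun k : ℤ => (k : ℝ)) _).const_mul_left b)
  have hS : signedSum (fun i => (c i)⁻¹ - γ * c i) =o[cofinite] (fun k : ℤ => (k : ℝ)) := by
    refine (hB.sub (hA.const_mul_left γ)).congr_left fun k => ?_
    rw [signedSum_sub_const_mul, harmonicCoord]
    linear_combination (k : ℝ) * hγa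
  have hψ : corrector c γ =o[cofinite] (fun k : ℤ => (k : ℝ) ^ 2) := by
    have := isLittleO_signedSum_mul (fun j => (inv_pos.2 (hc j)).le) (hS.add hS.comp_add_one) hH
    simpa only [corrector, div_eq_mul_inv] using this
  have hsq : (fun k => harmonicCoord c k ^ 2 - b ^ 2 * (k : ℝ) ^ 2) =o[cofinite]
      (fun k : ℤ => (k : ℝ) ^ 2) := by
    refine (hB.mul_isBigO (hH.add ((Asymptotics.isBigO_refl _ _).const_mul_left b))).congr
      (fun k => by ring) (fun k => by ring)
  have hr := hψ.sub hsq
  convert tendsto_div_of_forall_abs_sub_le (x := fun n => walkExp c n (fun m => (m : ℝ) ^ 2))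
    (γ := γ) (pow_pos hb 2) (fun n => ?_) (fun ε hε => ?_) using 2
  · simp only [γ]
    field_simp
  · exact (walkExp_const c hc n 0).symm.le.trans (walkExp_mono c hc n fun k => sq_nonneg _)
  · obtain ⟨C, hC⟩ := hr.exists_abs_le_mul_add hε
    refine ⟨C, fun n => ?_⟩
    have hsplit : b ^ 2 * walkExp c n (fun m => (m : ℝ) ^ 2) - γ * n = walkExp c n
        (fun k => corrector c γ k - (harmonicCoord c k ^ 2 - b ^ 2 * (k : ℝ) ^ 2)) := by
      rw [← walkExp_sq_harmonicCoord_sub_corrector hc γ n, walkExp_sub, walkExp_sub,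
        walkExp_sub, walkExp_const_mul]
      ring
    rw [hsplit]
    refine (abs_walkExp_le c hc n (g := fun k => ε * (k : ℝ) ^ 2 + C) fun k => ?_).trans_eq ?_
    · simpa only [abs_pow, sq_abs] using hC k
    · rw [walkExp_add, walkExp_const_mul, walkExp_const c hc]

section Environment

variable {Ω : Type*} [MeasurableSpace Ω] {μ : Measure Ω}

lemma measurePreserving_zIter {T : Ω ≃ᵐ Ω} (hT : MeasurePreserving T μ μ) (k : ℤ) :
    MeasurePreserving (zIter T k) μ μ := by
  unfold zIter
  split_ifs
  exacts [hT.iterate _, (hT.symm T).iterate _]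

lemma signedSum_comp_zIter_natCast (T : Ω ≃ᵐ Ω) (g : Ω → ℝ) (ω : Ω) (n : ℕ) :
    signedSum (fun k => g (zIter T k ω)) n = birkhoffSum T g n ω := by
  simp [signedSum_natCast, zIter, birkhoffSum]

lemma signedSum_comp_zIter_neg_natCast (T : Ω ≃ᵐ Ω) (g : Ω → ℝ) (ω : Ω) (n : ℕ) :
    signedSum (fun k => g (zIter T k ω)) (-n) =
      -birkhoffSum T.symm (fun x => g (T.symm x)) n ω := by
  rw [signedSum_neg_natCast, birkhoffSum]
  congr 1
  refine sum_congr rfl fun j _ => ?_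
  have hneg : ¬ (0 : ℤ) ≤ -(j + 1 : ℤ) := by omega
  have htoNat : (-(-(j + 1 : ℤ))).toNat = j + 1 := by omega
  rw [zIter, if_neg hneg, htoNat, Function.iterate_succ_apply']

lemma ae_isLittleO_signedSum_comp_zIter [IsProbabilityMeasure μ] {T : Ω ≃ᵐ Ω}
    (hT : Ergodic T μ) {g : Ω → ℝ} (hgm : Measurable g) (hg : Integrable g μ) :
    ∀ᵐ ω ∂μ, (fun k => signedSum (fun j => g (zIter T j ω)) k - (∫ x, g x ∂μ) * k)
      =o[cofinite] (fun k : ℤ => (k : ℝ)) := by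
  have hTsymm := hT.toMeasurePreserving.symm T
  filter_upwards [ae_tendsto_birkhoffAverage hT hgm hg,
    ae_tendsto_birkhoffAverage hT.symm (hgm.comp T.symm.measurable)
      (hTsymm.integrable_comp_of_integrable hg)] with ω hp hm
  rw [Function.comp_def, hTsymm.integral_comp' g] at hm
  refine isLittleO_signedSum_sub_mul ?_ ?_
  · simpa [signedSum_comp_zIter_natCast, birkhoffAverage, inv_mul_eq_div] using hp
  · simpa [signedSum_comp_zIter_neg_natCast, birkhoffAverage, inv_mul_eq_div] using hm

lemma integral_pos_of_ae_pos [NeZero μ] {g : Ω → ℝ} (hg : ∀ᵐ ω ∂μ, 0 < g ω)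
    (hgi : Integrable g μ) : 0 < ∫ ω, g ω ∂μ := by
  rw [integral_pos_iff_support_of_nonneg_ae (hg.mono fun _ h => h.le) hgi]
  refine pos_iff_ne_zero.2 fun h => ?_
  obtain ⟨ω, hω, hω'⟩ := (hg.and (measure_eq_zero_iff_ae_notMem.1 h)).exists
  exact hω' hω.ne'

lemma ae_forall_pos_comp_zIter {T : Ω ≃ᵐ Ω} (hT : MeasurePreserving T μ μ) {c : Ω → ℝ}
    (hc : ∀ᵐ ω ∂μ, 0 < c ω) : ∀ᵐ ω ∂μ, ∀ k, 0 < c (zIter T k ω) :=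
  ae_all_iff.2 fun k => (measurePreserving_zIter hT k).quasiMeasurePreserving.ae
    (p := fun ω => 0 < c ω) hc

end Environment

theorem stmt_6 {Ω : Type*} [MeasurableSpace Ω] (μ : Measure Ω) [IsProbabilityMeasure μ]
    (T : Ω ≃ᵐ Ω) (hT : Ergodic T μ)
    (c : Ω → ℝ) (hcmeas : Measurable c) (hc : ∀ᵐ ω ∂μ, 0 < c ω)
    (hcint : Integrable c μ) (hcinvint : Integrable (fun ω => (c ω)⁻¹) μ) :
    ∀ᵐ ω ∂μ,
      Tendsto
        (fun n : ℕ =>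
          (∑ m ∈ Finset.Icc (-(n : ℤ)) (n : ℤ),
            walkLaw (fun k => c (zIter T k ω)) n m * (m : ℝ) ^ 2) / (n : ℝ))
        atTop
        (nhds (((∫ ω', c ω' ∂μ) * (∫ ω', (c ω')⁻¹ ∂μ))⁻¹)) := by
  have ha := integral_pos_of_ae_pos hc hcint
  have hb := integral_pos_of_ae_pos (hc.mono fun _ h => inv_pos.2 h) hcinvint
  filter_upwards [ae_forall_pos_comp_zIter hT.toMeasurePreserving hc,
    ae_isLittleO_signedSum_comp_zIter hT hcmeas hcint,
    ae_isLittleO_signedSum_comp_zIter hT hcmeas.inv hcinvint] with ω hpos hA hB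
  exact tendsto_walkExp_sq_div hpos ha hb hA hB
end
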